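/- Let ρ'_{XDE} be a cq-state where X is classical and uniform with respect to D (i.e., ρ'_{XD} = U_X ⊗ ρ'_D). Then there exist a register E', a state ρ_{XDE'} in which X is uniform with respect to D ⊗ E' (globally uniform), and an X-controlled quantum operation M from E' to E, such that ρ' = M(ρ). -/

import Mathlib

/-!
Uniformity of `X` with respect to `D` forces `p x = 1/|X|` and gives all conditional states
`ρ_DE^x` the same `D`-marginal `ρ₀`. Write `ρ_DE^x = ∑ᵤ |ψ_{x,u}⟩⟨ψ_{x,u}|` and encode a vector of
`D ⊗ F` by its amplitude matrix `F × D`; the `D`-marginal of `|W⟩⟨W|` is then `(WᴴW)ᵀ`. Let `φ`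
be the purification of `ρ₀` with amplitude matrix `V s`, where `s = √ρ₀ᵀ` and the isometry `V`
embeds `D` into `E' = D ⊗ E`. As in Uhlmann's theorem, `K_{x,u} = T_{x,u} s⁺ Vᴴ` (`s⁺` the
pseudo-inverse of `s`, `T_{x,u}` the amplitude matrix of `ψ_{x,u}`) maps `φ` to `ψ_{x,u}`, and
`∑ᵤ K_{x,u}ᴴ K_{x,u}` is the projection `V s⁺ s Vᴴ`. Completing the `K_{x,u}` by operators that
vanish on its range, hence annihilate `φ`, yields an `X`-controlled trace-preserving operation
taking `U_X ⊗ |φ⟩⟨φ|` to `ρ'`.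
-/

open Matrix
open scoped ComplexOrder Kronecker

/-- The square root of a positive semidefinite matrix (the definition `Matrix.PosSemidef.sqrt`
of the older Mathlib, which is no longer available). -/
noncomputable def Matrix.PosSemidef.sqrt {n : Type*} [Fintype n] [DecidableEq n]
    {A : Matrix n n ℂ} (hA : A.PosSemidef) : Matrix n n ℂ :=
  (hA.1.eigenvectorUnitary : Matrix n n ℂ) * diagonal (((↑) : ℝ → ℂ) ∘ Real.sqrt ∘ hA.1.eigenvalues) *
    (star hA.1.eigenvectorUnitary : Matrix n n ℂ)

/-- The trace norm of a matrix: `tr √(AᴴA)`, i.e. the sum of singular values. -/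
noncomputable def traceNorm {n : Type*} [Fintype n] [DecidableEq n]
    (A : Matrix n n ℂ) : ℝ :=
  ((Matrix.PosSemidef.sqrt (Matrix.posSemidef_conjTranspose_mul_self A)).trace).re

/-- A density operator: positive semidefinite with unit trace. -/
def IsDensity {n : Type*} [Fintype n] [DecidableEq n] (ρ : Matrix n n ℂ) : Prop :=
  ρ.PosSemidef ∧ ρ.trace = 1

/-- The fidelity `F(ρ,σ) = ‖√ρ √σ‖₁` of two positive semidefinite matrices. -/
noncomputable def fidelity {n : Type*} [Fintype n] [DecidableEq n]
    {ρ σ : Matrix n n ℂ} (hρ : ρ.PosSemidef) (hσ : σ.PosSemidef) : ℝ :=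
  traceNorm (Matrix.PosSemidef.sqrt hρ * Matrix.PosSemidef.sqrt hσ)

/-- Partial trace over the second tensor factor. -/
noncomputable def ptraceB {a b : Type*} [Fintype a] [Fintype b]
    (ρ : Matrix (a × b) (a × b) ℂ) : Matrix a a ℂ :=
  fun i j => ∑ k : b, ρ (i, k) (j, k)

/-- Output of a quantum operation given in Kraus form. -/
noncomputable def applyKraus {n m : Type*} [Fintype n] [Fintype m] {r : ℕ}
    (K : Fin r → Matrix m n ℂ) (ρ : Matrix n n ℂ) : Matrix m m ℂ :=
  ∑ j, K j * ρ * (K j)ᴴ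

/-- The Kraus family is trace preserving. -/
def TracePreserving {n m : Type*} [Fintype n] [Fintype m] [DecidableEq n] {r : ℕ}
    (K : Fin r → Matrix m n ℂ) : Prop :=
  ∑ j, (K j)ᴴ * K j = 1

section
variable {χ d e : Type*} [Fintype χ] [DecidableEq χ]
  [Fintype d] [DecidableEq d] [Fintype e] [DecidableEq e]

/-- Partial trace over the last register of `X ⊗ (D ⊗ E)`. -/
noncomputable def ptrLast {b : Type*} [Fintype b]
    (ρ : Matrix (χ × d × b) (χ × d × b) ℂ) : Matrix (χ × d) (χ × d) ℂ :=
  fun i j => ∑ k : b, ρ (i.1, i.2, k) (j.1, j.2, k)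

/-- Partial trace over the first register. -/
noncomputable def ptrFst {a b : Type*} [Fintype a] [Fintype b]
    (ρ : Matrix (a × b) (a × b) ℂ) : Matrix b b ℂ :=
  fun i j => ∑ k : a, ρ (k, i) (k, j)

/-- The maximally mixed state on a register. -/
noncomputable def uniformOn (χ : Type*) [Fintype χ] [DecidableEq χ] : Matrix χ χ ℂ :=
  ((Fintype.card χ : ℂ))⁻¹ • (1 : Matrix χ χ ℂ)

end

open scoped MatrixOrder

namespace Matrix

section HermitianPinv

variable {n : Type*} [Fintype n] [DecidableEq n]

/-- Since `0⁻¹ = 0`, this inverts exactly the nonzero eigenvalues: it is the Moore–Penrose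
pseudo-inverse of a Hermitian matrix. -/
noncomputable def hermitianPinv (s : Matrix n n ℂ) : Matrix n n ℂ :=
  cfc (fun x : ℝ => x⁻¹) s

theorem isHermitian_hermitianPinv (s : Matrix n n ℂ) : (hermitianPinv s).IsHermitian :=
  cfc_predicate _ s

theorem cfc_mul_cfc (f g : ℝ → ℝ) (s : Matrix n n ℂ) :
    cfc f s * cfc g s = cfc (fun x => f x * g x) s :=
  (cfc_mul f g s (s.finite_real_spectrum.continuousOn _)
    (s.finite_real_spectrum.continuousOn _)).symm

variable {s : Matrix n n ℂ}

theorem IsHermitian.mul_hermitianPinv_comm (hs : s.IsHermitian) :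
    s * hermitianPinv s = hermitianPinv s * s := by
  have hid : cfc (fun x : ℝ => x) s = s := cfc_id' ℝ s hs
  calc s * hermitianPinv s = cfc (fun x : ℝ => x) s * cfc (fun x : ℝ => x⁻¹) s := by
        rw [hid, hermitianPinv]
    _ = cfc (fun x : ℝ => x⁻¹) s * cfc (fun x : ℝ => x) s := by
        simp only [cfc_mul_cfc, mul_comm]
    _ = hermitianPinv s * s := by rw [hid, hermitianPinv]

theorem IsHermitian.mul_hermitianPinv_mul_self (hs : s.IsHermitian) :
    s * hermitianPinv s * s = s := by
  have hid : cfc (fun x : ℝ => x) s = s := cfc_id' ℝ s hs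
  calc s * hermitianPinv s * s
      = cfc (fun x : ℝ => x) s * cfc (fun x : ℝ => x⁻¹) s * cfc (fun x : ℝ => x) s := by
        rw [hid, hermitianPinv]
    _ = s := by rw [cfc_mul_cfc, cfc_mul_cfc]; simp only [mul_inv_mul_cancel, hid]

theorem IsHermitian.hermitianPinv_mul_self_mul_self (hs : s.IsHermitian) :
    hermitianPinv s * s * s = s := by
  rw [← hs.mul_hermitianPinv_comm, hs.mul_hermitianPinv_mul_self]

theorem IsHermitian.isStarProjection_hermitianPinv_mul_self (hs : s.IsHermitian) :
    IsStarProjection (hermitianPinv s * s) := by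
  refine isStarProjection_iff'.mpr ⟨?_, ?_⟩
  · rw [Matrix.mul_assoc, ← Matrix.mul_assoc s, hs.mul_hermitianPinv_mul_self]
  · rw [star_eq_conjTranspose, conjTranspose_mul, hs.eq, (isHermitian_hermitianPinv s).eq,
      hs.mul_hermitianPinv_comm]

end HermitianPinv

theorem eq_zero_of_sum_conjTranspose_mul_self_eq_zero {m n ι : Type*} [Fintype m] [Fintype n]
    [Fintype ι] {A : ι → Matrix m n ℂ} (h : ∑ i, (A i)ᴴ * A i = 0) (i : ι) : A i = 0 := by
  rw [Finset.sum_eq_zero_iff_of_nonneg fun j _ => (posSemidef_conjTranspose_mul_self _).nonneg]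
    at h
  exact conjTranspose_mul_self_eq_zero.mp (h i (Finset.mem_univ i))

theorem sum_conjTranspose_mul_self_mul {d e f ι : Type*} [Fintype d] [Fintype e] [Fintype ι]
    (T : ι → Matrix e d ℂ) (A : Matrix d f ℂ) :
    ∑ i, (T i * A)ᴴ * (T i * A) = Aᴴ * (∑ i, (T i)ᴴ * T i) * A := by
  rw [Matrix.mul_sum, Matrix.sum_mul]
  simp only [conjTranspose_mul, Matrix.mul_assoc]

theorem sum_single_mul_conjTranspose_mul {e f : Type*} [Fintype e] [DecidableEq e] [Fintype f]
    [DecidableEq f] (e₀ : e) (Q : Matrix f f ℂ) :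
    ∑ c : f, (single e₀ c (1 : ℂ) * Q)ᴴ * (single e₀ c (1 : ℂ) * Q) = Qᴴ * Q := by
  have h (c : f) : (single e₀ c (1 : ℂ) * Q)ᴴ * (single e₀ c (1 : ℂ) * Q) =
      Qᴴ * single c c 1 * Q := by
    rw [conjTranspose_mul, conjTranspose_single, star_one, Matrix.mul_assoc,
      ← Matrix.mul_assoc (single c e₀ 1), single_mul_single_same, mul_one, Matrix.mul_assoc]
  simp_rw [h, ← Finset.sum_mul, ← Finset.mul_sum, sum_single_one, Matrix.mul_one]

theorem conjTranspose_submatrix_one_mul_self {d f : Type*} [DecidableEq d] [Fintype f]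
    [DecidableEq f] {g : d → f} (hg : Function.Injective g) :
    ((1 : Matrix f f ℂ).submatrix id g)ᴴ * (1 : Matrix f f ℂ).submatrix id g = 1 := by
  rw [conjTranspose_submatrix, conjTranspose_one, ← submatrix_mul _ _ _ id _ Function.bijective_id,
    Matrix.one_mul, submatrix_one _ hg]

theorem isStarProjection_mul_mul_conjTranspose {d f : Type*} [Fintype d] [DecidableEq d]
    [Fintype f] {V : Matrix f d ℂ} (hV : Vᴴ * V = 1) {P : Matrix d d ℂ}
    (hP : IsStarProjection P) : IsStarProjection (V * P * Vᴴ) := by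
  obtain ⟨hPP, hPH⟩ := isStarProjection_iff'.mp hP
  refine isStarProjection_iff'.mpr ⟨?_, ?_⟩
  · calc V * P * Vᴴ * (V * P * Vᴴ) = V * P * (Vᴴ * V) * P * Vᴴ := by
          simp only [Matrix.mul_assoc]
      _ = V * P * Vᴴ := by rw [hV, Matrix.mul_one, Matrix.mul_assoc V P P, hPP]
  · rw [star_eq_conjTranspose, conjTranspose_mul, conjTranspose_mul, conjTranspose_conjTranspose,
      ← star_eq_conjTranspose P, hPH, Matrix.mul_assoc]

end Matrix

open Matrix

section PureState

variable {a b c ι : Type*}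

/-- The vector of `a × b` with amplitude `W k i` at `(i, k)`: in this convention `1 ⊗ N` acts on
it as `W ↦ N * W`. -/
def tensorVec (W : Matrix b a ℂ) : a × b → ℂ := fun u => W u.2 u.1

def pureState (W : Matrix b a ℂ) : Matrix (a × b) (a × b) ℂ :=
  vecMulVec (tensorVec W) (star (tensorVec W))

@[simp]
theorem pureState_zero : pureState (0 : Matrix b a ℂ) = 0 :=
  zero_vecMulVec _

theorem mul_conjTranspose_eq_sum_pureState [Fintype ι] (t : Matrix (a × b) ι ℂ) :
    t * tᴴ = ∑ i, pureState (of fun k j => t (j, k) i) := by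
  ext u v
  simp [mul_apply, Matrix.sum_apply, pureState, tensorVec, vecMulVec_apply]

variable [Fintype a] [Fintype b]

theorem posSemidef_pureState (W : Matrix b a ℂ) : (pureState W).PosSemidef :=
  posSemidef_vecMulVec_self_star _

theorem one_kronecker_mulVec_tensorVec [DecidableEq a] (N : Matrix c b ℂ) (W : Matrix b a ℂ) :
    ((1 : Matrix a a ℂ) ⊗ₖ N) *ᵥ tensorVec W = tensorVec (N * W) := by
  ext ⟨i, k⟩
  simp [tensorVec, mulVec, dotProduct, mul_apply, Fintype.sum_prod_type, one_apply, ite_mul]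

theorem one_kronecker_mul_pureState_mul_conjTranspose [DecidableEq a] (N : Matrix c b ℂ)
    (W : Matrix b a ℂ) :
    ((1 : Matrix a a ℂ) ⊗ₖ N) * pureState W * ((1 : Matrix a a ℂ) ⊗ₖ N)ᴴ = pureState (N * W) := by
  rw [pureState, mul_vecMulVec, vecMulVec_mul, ← star_mulVec, one_kronecker_mulVec_tensorVec,
    pureState]

theorem ptraceB_sum_pureState [Fintype ι] (T : ι → Matrix b a ℂ) :
    ptraceB (∑ i, pureState (T i)) = (∑ i, (T i)ᴴ * T i)ᵀ := by
  ext i i'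
  simp only [ptraceB, pureState, tensorVec, Matrix.sum_apply, vecMulVec_apply, Pi.star_apply,
    transpose_apply, mul_apply, conjTranspose_apply]
  rw [Finset.sum_comm]
  exact Finset.sum_congr rfl fun _ _ => Finset.sum_congr rfl fun _ _ => mul_comm _ _

theorem trace_pureState (W : Matrix b a ℂ) : (pureState W).trace = (Wᴴ * W).trace := by
  rw [pureState, trace_vecMulVec, dotProduct, Fintype.sum_prod_type]
  simp [tensorVec, trace, mul_apply, mul_comm]

theorem trace_ptraceB (ρ : Matrix (a × b) (a × b) ℂ) : (ptraceB ρ).trace = ρ.trace := by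
  simp [trace, ptraceB, Fintype.sum_prod_type]

theorem Matrix.PosSemidef.exists_eq_sum_pureState [DecidableEq a] [DecidableEq b]
    {ρ : Matrix (a × b) (a × b) ℂ} (hρ : ρ.PosSemidef) :
    ∃ T : a × b → Matrix b a ℂ, ρ = ∑ u, pureState (T u) := by
  have ht := (CFC.sqrt_nonneg ρ).posSemidef.isHermitian
  refine ⟨_, Eq.trans ?_ (mul_conjTranspose_eq_sum_pureState (CFC.sqrt ρ))⟩
  rw [ht.eq, CFC.sqrt_mul_sqrt_self ρ hρ.nonneg]

end PureState

section Kraus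

variable {d e f ι : Type*} [Fintype d] [DecidableEq d] [Fintype e] [Fintype ι]

theorem Matrix.IsHermitian.mul_hermitianPinv_mul_self_of_sum {s : Matrix d d ℂ}
    (hs : s.IsHermitian) {T : ι → Matrix e d ℂ} (hT : ∑ i, (T i)ᴴ * T i = s * s) (i : ι) :
    T i * (hermitianPinv s * s) = T i := by
  have hQ := hs.isStarProjection_hermitianPinv_mul_self.one_sub
  have hsQ : s * (1 - hermitianPinv s * s) = 0 := by
    rw [Matrix.mul_sub, Matrix.mul_one, ← Matrix.mul_assoc, hs.mul_hermitianPinv_mul_self,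
      sub_self]
  have hTQ : ∑ i, (T i * (1 - hermitianPinv s * s))ᴴ * (T i * (1 - hermitianPinv s * s)) = 0 := by
    rw [sum_conjTranspose_mul_self_mul, hT, ← star_eq_conjTranspose, hQ.isSelfAdjoint.star_eq,
      Matrix.mul_assoc, Matrix.mul_assoc, hsQ, Matrix.mul_zero, Matrix.mul_zero]
  have := eq_zero_of_sum_conjTranspose_mul_self_eq_zero hTQ i
  rwa [Matrix.mul_sub, Matrix.mul_one, sub_eq_zero, eq_comm] at this

variable [DecidableEq e] [Fintype f] [DecidableEq f]

theorem exists_kraus_mul_eq (e₀ : e) {V : Matrix f d ℂ} (hV : Vᴴ * V = 1) {s : Matrix d d ℂ}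
    (hs : s.IsHermitian) {T : ι → Matrix e d ℂ} (hT : ∑ i, (T i)ᴴ * T i = s * s) :
    ∃ K : ι ⊕ f → Matrix e f ℂ, ∑ j, (K j)ᴴ * K j = 1 ∧ ∀ j, K j * (V * s) = Sum.elim T 0 j := by
  have hP := hs.isStarProjection_hermitianPinv_mul_self
  have hR := (isStarProjection_mul_mul_conjTranspose hV hP).one_sub
  have hsum : ∑ i, (T i * (hermitianPinv s * Vᴴ))ᴴ * (T i * (hermitianPinv s * Vᴴ)) =
      V * (hermitianPinv s * s) * Vᴴ := by
    rw [sum_conjTranspose_mul_self_mul, hT, conjTranspose_mul, conjTranspose_conjTranspose,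
      (isHermitian_hermitianPinv s).eq]
    calc V * hermitianPinv s * (s * s) * (hermitianPinv s * Vᴴ)
        = V * ((hermitianPinv s * s) * (s * hermitianPinv s)) * Vᴴ := by
          simp only [Matrix.mul_assoc]
      _ = V * (hermitianPinv s * s) * Vᴴ := by
          rw [hs.mul_hermitianPinv_comm, hP.isIdempotentElem.eq]
  refine ⟨Sum.elim (fun i => T i * (hermitianPinv s * Vᴴ))
    (fun c => single e₀ c (1 : ℂ) * (1 - V * (hermitianPinv s * s) * Vᴴ)), ?_, ?_⟩
  · rw [Fintype.sum_sum_type]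
    simp only [Sum.elim_inl, Sum.elim_inr]
    rw [hsum, sum_single_mul_conjTranspose_mul, ← star_eq_conjTranspose, hR.isSelfAdjoint.star_eq,
      hR.isIdempotentElem.eq, add_sub_cancel]
  · rintro (i | c)
    · simp only [Sum.elim_inl]
      rw [Matrix.mul_assoc, Matrix.mul_assoc, ← Matrix.mul_assoc Vᴴ, hV, Matrix.one_mul,
        hs.mul_hermitianPinv_mul_self_of_sum hT]
    · have hRVs : V * (hermitianPinv s * s) * Vᴴ * (V * s) = V * s := by
        rw [Matrix.mul_assoc, ← Matrix.mul_assoc Vᴴ, hV, Matrix.one_mul, Matrix.mul_assoc,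
          hs.hermitianPinv_mul_self_mul_self]
      simp only [Sum.elim_inr, Pi.zero_apply]
      rw [Matrix.mul_assoc, Matrix.sub_mul, Matrix.one_mul, hRVs, sub_self, Matrix.mul_zero]

theorem exists_tracePreserving_applyKraus_pureState_eq (e₀ : e) {V : Matrix f d ℂ}
    (hV : Vᴴ * V = 1) {s : Matrix d d ℂ} (hs : s.IsHermitian) {T : ι → Matrix e d ℂ}
    (hT : ∑ i, (T i)ᴴ * T i = s * s) :
    ∃ M : Fin (Fintype.card (ι ⊕ f)) → Matrix e f ℂ, TracePreserving M ∧
      applyKraus (fun j => (1 : Matrix d d ℂ) ⊗ₖ M j) (pureState (V * s)) =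
        ∑ i, pureState (T i) := by
  obtain ⟨K, hK, hKVs⟩ := exists_kraus_mul_eq e₀ hV hs hT
  let q := (Fintype.equivFin (ι ⊕ f)).symm
  refine ⟨fun j => K (q j), ?_, ?_⟩
  · rw [TracePreserving, Equiv.sum_comp q (fun j => (K j)ᴴ * K j), hK]
  · simp only [applyKraus, one_kronecker_mul_pureState_mul_conjTranspose]
    rw [Equiv.sum_comp q (fun j => pureState (K j * (V * s))), Fintype.sum_sum_type]
    simp [hKVs]

theorem exists_pureState_applyKraus_eq {κ : Type*} (e₀ : e) {ω : Matrix d d ℂ}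
    (hω : ω.PosSemidef) {T : κ → ι → Matrix e d ℂ} (hT : ∀ x, ∑ i, (T x i)ᴴ * T x i = ω) :
    ∃ W : Matrix (d × e) d ℂ, Wᴴ * W = ω ∧
      ∃ M : κ → Fin (Fintype.card (ι ⊕ d × e)) → Matrix e (d × e) ℂ,
        (∀ x, TracePreserving (M x)) ∧
        ∀ x, applyKraus (fun j => (1 : Matrix d d ℂ) ⊗ₖ M x j) (pureState W) =
          ∑ i, pureState (T x i) := by
  have hs := (CFC.sqrt_nonneg ω).posSemidef.isHermitian
  have hss : CFC.sqrt ω * CFC.sqrt ω = ω := CFC.sqrt_mul_sqrt_self _ hω.nonneg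
  set V := (1 : Matrix (d × e) (d × e) ℂ).submatrix id fun i => (i, e₀)
  have hV : Vᴴ * V = 1 := conjTranspose_submatrix_one_mul_self (Prod.mk_left_injective e₀)
  choose M hM using fun x =>
    exists_tracePreserving_applyKraus_pureState_eq e₀ hV hs ((hT x).trans hss.symm)
  refine ⟨V * CFC.sqrt ω, ?_, M, fun x => (hM x).1, fun x => (hM x).2⟩
  rw [conjTranspose_mul, hs.eq, Matrix.mul_assoc, ← Matrix.mul_assoc Vᴴ, hV, Matrix.one_mul, hss]

end Kraus

section CqState

variable {χ d e : Type*} [Fintype χ] [DecidableEq χ]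

theorem uniformOn_kronecker_apply (ρ₀ : Matrix d d ℂ) (x : χ) (i i' : d) :
    (uniformOn χ ⊗ₖ ρ₀) (x, i) (x, i') = (Fintype.card χ : ℂ)⁻¹ * ρ₀ i i' := by
  simp [uniformOn, kroneckerMap_apply]

variable [Fintype d] [Fintype e]

theorem ptrLast_sum_smul_single_kronecker_apply (p : χ → ℝ) (ρ : χ → Matrix (d × e) (d × e) ℂ)
    (x : χ) (i i' : d) :
    ptrLast (∑ y, (p y : ℂ) • (single y y 1 ⊗ₖ ρ y)) (x, i) (x, i') = p x * ptraceB (ρ x) i i' := by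
  simp [ptrLast, ptraceB, Matrix.sum_apply, kroneckerMap_apply, single_apply, Finset.mul_sum]

theorem eq_inv_card_and_ptraceB_eq_of_ptrLast_eq (p : χ → ℝ)
    (ρ : χ → Matrix (d × e) (d × e) ℂ) (hpsum : ∑ x, p x = 1) (htr : ∀ x, (ρ x).trace = 1)
    {ρ₀ : Matrix d d ℂ} (h : ptrLast (∑ x, (p x : ℂ) • (single x x 1 ⊗ₖ ρ x)) = uniformOn χ ⊗ₖ ρ₀)
    (x : χ) : (p x : ℂ) = (Fintype.card χ : ℂ)⁻¹ ∧ ptraceB (ρ x) = ρ₀ := by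
  have hblock (y : χ) : (p y : ℂ) • ptraceB (ρ y) = (Fintype.card χ : ℂ)⁻¹ • ρ₀ := by
    ext i i'
    have hyi := congrFun (congrFun h (y, i)) (y, i')
    rw [ptrLast_sum_smul_single_kronecker_apply, uniformOn_kronecker_apply] at hyi
    simpa only [Matrix.smul_apply, smul_eq_mul] using hyi
  have hp (y : χ) : (p y : ℂ) = (Fintype.card χ : ℂ)⁻¹ * ρ₀.trace := by
    simpa [trace_smul, trace_ptraceB, htr] using congrArg trace (hblock y)
  have hc : (Fintype.card χ : ℂ) * ((Fintype.card χ : ℂ)⁻¹ * ρ₀.trace) = 1 := by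
    simpa [hp] using congrArg (fun r : ℝ => (r : ℂ)) hpsum
  have hc₀ : (Fintype.card χ : ℂ) ≠ 0 := left_ne_zero_of_mul_eq_one hc
  have htr₀ : ρ₀.trace = 1 := by rwa [← mul_assoc, mul_inv_cancel₀ hc₀, one_mul] at hc
  have hpx : (p x : ℂ) = (Fintype.card χ : ℂ)⁻¹ := by rw [hp x, htr₀, mul_one]
  refine ⟨hpx, smul_right_injective _ (inv_ne_zero hc₀) ?_⟩
  simpa only [hpx] using hblock x

end CqState

theorem sum_single_kronecker_conj_uniformOn_kronecker {χ m n : Type*} [Fintype χ]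
    [DecidableEq χ] [Fintype m] [Fintype n] {r : ℕ} (B : χ → Fin r → Matrix m n ℂ)
    (σ : Matrix n n ℂ) :
    ∑ x, ∑ j, (single x x 1 ⊗ₖ B x j) * (uniformOn χ ⊗ₖ σ) * (single x x 1 ⊗ₖ B x j)ᴴ =
      ∑ x, (Fintype.card χ : ℂ)⁻¹ • (single x x 1 ⊗ₖ applyKraus (B x) σ) := by
  refine Finset.sum_congr rfl fun x _ => ?_
  have hU : single x x (1 : ℂ) * uniformOn χ * (single x x 1)ᴴ =
      (Fintype.card χ : ℂ)⁻¹ • single x x 1 := by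
    simp [uniformOn, single_mul_single_same]
  simp_rw [conjTranspose_kronecker, ← mul_kronecker_mul, hU, smul_kronecker]
  rw [← Finset.smul_sum]
  congr 1
  ext ⟨a, b⟩ ⟨a', b'⟩
  simp [applyKraus, Matrix.sum_apply, Finset.mul_sum]

section
variable {χ d e : Type*} [Fintype χ] [DecidableEq χ]
  [Fintype d] [DecidableEq d] [Fintype e] [DecidableEq e]

theorem device_uniform_from_global_uniform_general
    (p : χ → ℝ) (ρDE : χ → Matrix (d × e) (d × e) ℂ)
    (hpsum : ∑ x, p x = 1)
    (hρDE : ∀ x, (ρDE x).PosSemidef ∧ (ρDE x).trace = 1)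
    -- the cq-state ρ' on X ⊗ D ⊗ E
    (ρ' : Matrix (χ × d × e) (χ × d × e) ℂ)
    (hρ' : ρ' = ∑ x, (p x : ℂ) • (single x x 1 ⊗ₖ ρDE x))
    -- X is uniform-to-D: ρ'_{XD} = U_X ⊗ ρ'_D
    (hunif : ptrLast (χ := χ) ρ' = uniformOn χ ⊗ₖ ptrFst (ptrLast (χ := χ) ρ')) :
    -- E' := d × e is the purifying register
    ∃ (σ : Matrix (d × (d × e)) (d × (d × e)) ℂ), IsDensity σ ∧
      ∃ (r : ℕ) (M : χ → Fin r → Matrix e (d × e) ℂ),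
        (∀ x, TracePreserving (M x)) ∧
        ρ' = ∑ x : χ, ∑ j,
          (single x x 1 ⊗ₖ ((1 : Matrix d d ℂ) ⊗ₖ M x j)) *
            (uniformOn χ ⊗ₖ σ) *
          (single x x 1 ⊗ₖ ((1 : Matrix d d ℂ) ⊗ₖ M x j))ᴴ := by
  set ρ₀ := ptrFst (ptrLast (χ := χ) ρ')
  subst hρ'
  have hmarg := eq_inv_card_and_ptraceB_eq_of_ptrLast_eq p ρDE hpsum (fun x => (hρDE x).2) hunif
  obtain ⟨x₀, -⟩ := Finset.nonempty_of_sum_ne_zero (s := .univ) (f := p)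
    (by rw [hpsum]; exact one_ne_zero)
  obtain ⟨⟨-, e₀⟩, -⟩ := Finset.nonempty_of_sum_ne_zero (s := .univ) (f := diag (ρDE x₀))
    (by rw [← trace, (hρDE x₀).2]; exact one_ne_zero)
  choose T hT using fun x => (hρDE x).1.exists_eq_sum_pureState
  have hTρ₀ (x : χ) : ∑ u, (T x u)ᴴ * T x u = ρ₀ᵀ := by
    rw [← (hmarg x).2, hT x, ptraceB_sum_pureState, transpose_transpose]
  have hρ₀ : ρ₀ᵀ.PosSemidef :=
    hTρ₀ x₀ ▸ posSemidef_sum _ fun u _ => posSemidef_conjTranspose_mul_self (T x₀ u)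
  obtain ⟨W, hW, M, hMtp, hM⟩ := exists_pureState_applyKraus_eq e₀ hρ₀ hTρ₀
  refine ⟨pureState W, ⟨posSemidef_pureState W, ?_⟩, _, M, hMtp, ?_⟩
  · rw [trace_pureState, hW, trace_transpose, ← (hmarg x₀).2, trace_ptraceB, (hρDE x₀).2]
  · rw [sum_single_kronecker_conj_uniformOn_kronecker]
    refine Finset.sum_congr rfl fun x _ => ?_
    rw [hM x, ← hT x, (hmarg x).1]

/-- Any state whose classical part `X` is uniform relative to the devices `D` is
the image, under an `X`-controlled operation acting on the adversary register, of a
state whose `X` is globally uniform (Uhlmann construction, with `E' = D ⊗ E`). -/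
theorem device_uniform_from_global_uniform
    (p : χ → ℝ) (ρDE : χ → Matrix (d × e) (d × e) ℂ)
    (hp : ∀ x, 0 ≤ p x) (hpsum : ∑ x, p x = 1)
    (hρDE : ∀ x, (ρDE x).PosSemidef ∧ (ρDE x).trace = 1)
    -- the cq-state ρ' on X ⊗ D ⊗ E
    (ρ' : Matrix (χ × d × e) (χ × d × e) ℂ)
    (hρ' : ρ' = ∑ x, (p x : ℂ) • (single x x 1 ⊗ₖ ρDE x))
    -- X is uniform-to-D: ρ'_{XD} = U_X ⊗ ρ'_D
    (hunif : ptrLast (χ := χ) ρ' = uniformOn χ ⊗ₖ ptrFst (ptrLast (χ := χ) ρ')) :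
    -- E' := d × e is the purifying register
    ∃ (σ : Matrix (d × (d × e)) (d × (d × e)) ℂ), IsDensity σ ∧
      ∃ (r : ℕ) (M : χ → Fin r → Matrix e (d × e) ℂ),
        (∀ x, TracePreserving (M x)) ∧
        ρ' = ∑ x : χ, ∑ j,
          (single x x 1 ⊗ₖ ((1 : Matrix d d ℂ) ⊗ₖ M x j)) *
            (uniformOn χ ⊗ₖ σ) *
          (single x x 1 ⊗ₖ ((1 : Matrix d d ℂ) ⊗ₖ M x j))ᴴ :=
  device_uniform_from_global_uniform_general p ρDE hpsum hρDE ρ' hρ' hunif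

end
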